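/- arXiv:1805.00190 — 4 statements merged into one kernel-verified Lean document; each statement's English description precedes it below -/
import Mathlib

section
/- Let P and P' be distinct elements of 𝓡, where P is the preferred replacement path for an edge e of Q and P' is the preferred replacement path for an edge e' of Q, with e and e' both before t_s and e strictly before e'. Then the divergence point of P' lies strictly after the endpoint of e closer to s, i.e., the detour of P' starts after the edge e on Q. -/
open SimpleGraph

variable {V : Type*} [DecidableEq V]

/-- The total `w`-weight of a walk: the sum of the weights of its edges. -/
def walkWeight {G : SimpleGraph V} (w : Sym2 V → ℝ) {u v : V} (p : G.Walk u v) : ℝ :=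
  (p.edges.map w).sum

/-- The position of a vertex `v` on the walk `Q` (number of edges of `Q` before `v`);
a vertex is *before* another on `Q` if its position is smaller, i.e. it is closer to the
start of `Q`. -/
def vIdx {G : SimpleGraph V} {s t : V} (Q : G.Walk s t) (v : V) : ℕ :=
  Q.support.idxOf v

/-- The position of an edge `e` on the walk `Q`: the edge at position `i` joins the
vertices of `Q` at positions `i` and `i+1`. An edge is *before* another if its position
is smaller; the edge at position `i` is *before* a vertex `v` of `Q` if `i < vIdx Q v`,
and its merge point is *after* `v` if its position is `> vIdx Q v`. -/
def eIdx {G : SimpleGraph V} {s t : V} (Q : G.Walk s t) (e : Sym2 V) : ℕ :=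
  Q.edges.idxOf e

/-- `P` diverges and merges `Q` just once, with divergence point `a`, merge point `b` and
detour `D`: `P` is the concatenation of the initial segment of `Q` from `s` to `a`, the
detour `D` (a path from `a` to `b` none of whose internal vertices lies on `Q`), and the
final segment of `Q` from `b` to `t`. -/
def DivergeMergeOnce {G : SimpleGraph V} {s t : V} (Q P : G.Walk s t) (a b : V)
    (D : G.Walk a b) : Prop :=
  ∃ (ha : a ∈ Q.support) (hb : b ∈ Q.support),
    D.IsPath ∧ (∀ v ∈ D.support, v ≠ a → v ≠ b → v ∉ Q.support) ∧
    P = (Q.takeUntil a ha).append (D.append (Q.dropUntil b hb))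

/-- `P` is a replacement path for the edge `e` of `Q` (an `s`–`t` walk not containing `e`)
that diverges and merges `Q` just once, with divergence point `a`, merge point `b` and
detour `D`. -/
def RepCand {G : SimpleGraph V} {s t : V} (Q : G.Walk s t) (e : Sym2 V)
    (P : G.Walk s t) (a b : V) (D : G.Walk a b) : Prop :=
  e ∉ P.edges ∧ DivergeMergeOnce Q P a b D

/-- The candidate `P` with divergence point `a` precedes the candidate `P'` with divergence
point `a'` in the total order comparing first the number of edges, then the divergence point
(closer to `s` is smaller), then the total `w`-weight. -/
def CandLE {G : SimpleGraph V} {s t : V} (w : Sym2 V → ℝ) (Q : G.Walk s t)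
    (P : G.Walk s t) (a : V) (P' : G.Walk s t) (a' : V) : Prop :=
  P.length < P'.length ∨
    (P.length = P'.length ∧ (vIdx Q a < vIdx Q a' ∨
      (vIdx Q a = vIdx Q a' ∧ walkWeight w P ≤ walkWeight w P')))

/-- `P` is the preferred replacement path for the edge `e` of `Q`: the minimum, in the
order `CandLE`, among replacement paths for `e` that diverge and merge `Q` just once. -/
def IsPreferred {G : SimpleGraph V} {s t : V} (w : Sym2 V → ℝ) (Q : G.Walk s t)
    (e : Sym2 V) (P : G.Walk s t) : Prop :=
  ∃ (a b : V) (D : G.Walk a b), RepCand Q e P a b D ∧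
    ∀ (P' : G.Walk s t) (a' b' : V) (D' : G.Walk a' b'),
      RepCand Q e P' a' b' D' → CandLE w Q P a P' a'

/-- `P` belongs to `𝓡`, witnessed by the data `(e, a, b, D)`: `P` is the preferred
replacement path for the edge `e` of `Q`, where `e` lies before `t_s` on `Q`, the
divergence point is `a`, the merge point `b` lies strictly after `t_s` on `Q`, and the
detour is `D`. -/
def MemR {G : SimpleGraph V} {s t : V} (w : Sym2 V → ℝ) (Q : G.Walk s t) (t_s : V)
    (e : Sym2 V) (P : G.Walk s t) (a b : V) (D : G.Walk a b) : Prop :=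
  e ∈ Q.edges ∧ eIdx Q e < vIdx Q t_s ∧
    RepCand Q e P a b D ∧ vIdx Q t_s < vIdx Q b ∧ IsPreferred w Q e P

/-- The set `𝓡` of preferred replacement paths for edges of `Q` before `t_s` whose merge
point lies strictly after `t_s`. -/
def RSet {G : SimpleGraph V} {s t : V} (w : Sym2 V → ℝ) (Q : G.Walk s t) (t_s : V) :
    Set (G.Walk s t) :=
  {P | ∃ (e : Sym2 V) (a b : V) (D : G.Walk a b), MemR w Q t_s e P a b D}

section Aux
set_option linter.unusedSectionVars false
set_option linter.unusedVariables false

variable {V : Type*} [DecidableEq V] {G : SimpleGraph V}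

open SimpleGraph

lemma list_mem_left_of_indexOf_lt {α : Type*} [DecidableEq α] {l1 l2 : List α} {x : α}
    (h : (l1 ++ l2).idxOf x < l1.length) : x ∈ l1 := by
  by_contra hn
  rw [List.idxOf_append_of_notMem hn] at h
  omega

lemma walk_support_inj {u v : V} (p : G.Walk u v) :
    ∀ (q : G.Walk u v), p.support = q.support → p = q := by
  induction p with
  | nil =>
    intro q h
    cases q with
    | nil => rfl
    | cons h2 q1 =>
      exfalso
      have := congrArg List.tail h
      simp only [Walk.support_nil, Walk.support_cons, List.tail_cons] at this
      exact q1.support_ne_nil this.symm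
  | cons h1 p1 ih =>
    intro q h
    cases q with
    | nil =>
      exfalso
      have := congrArg List.tail h
      simp only [Walk.support_nil, Walk.support_cons, List.tail_cons] at this
      exact p1.support_ne_nil this
    | cons h2 q1 =>
      simp only [Walk.support_cons, List.cons.injEq] at h
      have hxy : _ := h.2
      rw [Walk.support_eq_cons p1, Walk.support_eq_cons q1] at hxy
      obtain ⟨rfl, -⟩ := List.cons.injEq .. |>.mp hxy |>.imp id id
      have : p1 = q1 := ih q1 h.2
      subst this
      rfl

lemma indexOf_end {u v : V} {p : G.Walk u v} (hp : p.IsPath) :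
    p.support.idxOf v = p.length := by
  induction p with
  | nil => simp
  | @cons x y z h1 p1 ih =>
    rw [Walk.cons_isPath_iff] at hp
    have hne : x ≠ z := fun e => hp.2 (by rw [e]; exact p1.end_mem_support)
    rw [Walk.support_cons, List.idxOf_cons_ne _ hne, ih hp.1, Walk.length_cons]

lemma length_takeUntil {s t a : V} (Q : G.Walk s t) (hQ : Q.IsPath) (ha : a ∈ Q.support) :
    (Q.takeUntil a ha).length = vIdx Q a := by
  unfold vIdx
  conv_rhs => rw [← Q.take_spec ha]
  rw [Walk.support_append, List.idxOf_append_of_mem (Walk.end_mem_support _),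
    indexOf_end (hQ.takeUntil ha)]

lemma support_split {s t a : V} (Q : G.Walk s t) (ha : a ∈ Q.support) :
    Q.support = (Q.takeUntil a ha).support ++ (Q.dropUntil a ha).support.tail := by
  conv_lhs => rw [← Q.take_spec ha]
  rw [Walk.support_append]

lemma edges_split {s t a : V} (Q : G.Walk s t) (ha : a ∈ Q.support) :
    Q.edges = (Q.takeUntil a ha).edges ++ (Q.dropUntil a ha).edges := by
  conv_lhs => rw [← Q.take_spec ha]
  rw [Walk.edges_append]

lemma vIdx_le_of_mem_takeUntil {s t a v : V} {Q : G.Walk s t} (hQ : Q.IsPath)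
    (ha : a ∈ Q.support) (hv : v ∈ (Q.takeUntil a ha).support) : vIdx Q v ≤ vIdx Q a := by
  have h1 : vIdx Q v < (Q.takeUntil a ha).support.length := by
    unfold vIdx
    rw [support_split Q ha, List.idxOf_append_of_mem hv]
    exact List.idxOf_lt_length_iff.mpr hv
  rw [Walk.length_support, length_takeUntil Q hQ ha] at h1
  omega

lemma vIdx_lt_of_mem_dropUntil_tail {s t b v : V} {Q : G.Walk s t} (hQ : Q.IsPath)
    (hb : b ∈ Q.support) (hv : v ∈ (Q.dropUntil b hb).support.tail) : vIdx Q b < vIdx Q v := by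
  have hnd : v ∉ (Q.takeUntil b hb).support := by
    intro hmem
    have hnodup : Q.support.Nodup := hQ.support_nodup
    rw [support_split Q hb, List.nodup_append] at hnodup
    exact hnodup.2.2 _ hmem _ hv rfl
  have h1 : vIdx Q v = (Q.takeUntil b hb).support.length + (Q.dropUntil b hb).support.tail.idxOf v := by
    unfold vIdx
    rw [support_split Q hb, List.idxOf_append_of_notMem hnd]
  rw [Walk.length_support, length_takeUntil Q hQ hb] at h1
  omega

lemma eIdx_lt_of_mem_take {s t c : V} {Q : G.Walk s t} (hQ : Q.IsPath) {e : Sym2 V}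
    (hc : c ∈ Q.support) (he : e ∈ (Q.takeUntil c hc).edges) : eIdx Q e < vIdx Q c := by
  have h1 : eIdx Q e < (Q.takeUntil c hc).edges.length := by
    unfold eIdx
    rw [edges_split Q hc, List.idxOf_append_of_mem he]
    exact List.idxOf_lt_length_iff.mpr he
  rwa [Walk.length_edges, length_takeUntil Q hQ hc] at h1

lemma mem_take_of_eIdx_lt {s t c : V} {Q : G.Walk s t} (hQ : Q.IsPath) {e : Sym2 V}
    (hc : c ∈ Q.support) (he : e ∈ Q.edges) (h : eIdx Q e < vIdx Q c) :
    e ∈ (Q.takeUntil c hc).edges := by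
  apply list_mem_left_of_indexOf_lt (l2 := (Q.dropUntil c hc).edges)
  rw [← edges_split Q hc]
  show eIdx Q e < _
  rw [Walk.length_edges, length_takeUntil Q hQ hc]
  exact h

lemma vIdx_le_of_mem_drop_edges {s t c : V} {Q : G.Walk s t} (hQ : Q.IsPath) {e : Sym2 V}
    (hc : c ∈ Q.support) (he : e ∈ (Q.dropUntil c hc).edges) : vIdx Q c ≤ eIdx Q e := by
  have hnd : e ∉ (Q.takeUntil c hc).edges := by
    intro hmem
    have hnodup : Q.edges.Nodup := hQ.isTrail.edges_nodup
    rw [edges_split Q hc, List.nodup_append] at hnodup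
    exact hnodup.2.2 _ hmem _ he rfl
  have h1 : eIdx Q e = (Q.takeUntil c hc).edges.length + (Q.dropUntil c hc).edges.idxOf e := by
    unfold eIdx
    rw [edges_split Q hc, List.idxOf_append_of_notMem hnd]
  rw [Walk.length_edges, length_takeUntil Q hQ hc] at h1
  omega

end Aux

section Aux2
set_option linter.unusedSectionVars false
set_option linter.unusedVariables false

variable {V : Type*} [DecidableEq V] {G : SimpleGraph V}

open SimpleGraph

lemma edge_idx : ∀ {s t : V} (Q : G.Walk s t), Q.IsPath → ∀ {x y : V}, s(x, y) ∈ Q.edges →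
    (vIdx Q x = eIdx Q s(x, y) ∧ vIdx Q y = eIdx Q s(x, y) + 1) ∨
    (vIdx Q y = eIdx Q s(x, y) ∧ vIdx Q x = eIdx Q s(x, y) + 1) := by
  intro s t Q
  induction Q with
  | nil => intro _ x y he; simp at he
  | @cons u v w h1 p1 ih =>
    intro hQ x y he
    rw [Walk.cons_isPath_iff] at hQ
    have hu : ∀ z, z ∈ p1.support → z ≠ u := fun z hz e => hQ.2 (e ▸ hz)
    have hvIdx_u : vIdx (Walk.cons h1 p1) u = 0 := by
      unfold vIdx; rw [Walk.support_cons, List.idxOf_cons_self]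
    have hvIdx_mem : ∀ z ∈ p1.support, vIdx (Walk.cons h1 p1) z = vIdx p1 z + 1 := by
      intro z hz
      unfold vIdx
      rw [Walk.support_cons, List.idxOf_cons_ne _ (hu z hz).symm]
    have hvIdx_v : vIdx (Walk.cons h1 p1) v = 1 := by
      rw [hvIdx_mem v p1.start_mem_support]
      unfold vIdx
      rw [Walk.support_eq_cons p1, List.idxOf_cons_self]
    rw [Walk.edges_cons, List.mem_cons] at he
    rcases he with heq | hmem
    · have heIdx : eIdx (Walk.cons h1 p1) s(x, y) = 0 := by
        unfold eIdx
        rw [Walk.edges_cons, heq, List.idxOf_cons_self]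
      rw [heIdx]
      rcases Sym2.eq_iff.mp heq with ⟨rfl, rfl⟩ | ⟨rfl, rfl⟩
      · exact Or.inl ⟨hvIdx_u, hvIdx_v⟩
      · exact Or.inr ⟨hvIdx_u, hvIdx_v⟩
    · have hne : s(x, y) ≠ s(u, v) := by
        intro heq
        have htrail : (Walk.cons h1 p1).IsTrail := (Walk.cons_isPath_iff h1 p1 |>.mpr hQ).isTrail
        rw [Walk.isTrail_cons] at htrail
        exact htrail.2 (heq ▸ hmem)
      have heIdx : eIdx (Walk.cons h1 p1) s(x, y) = eIdx p1 s(x, y) + 1 := by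
        unfold eIdx
        rw [Walk.edges_cons, List.idxOf_cons_ne _ (Ne.symm hne)]
      have hx : x ∈ p1.support := p1.fst_mem_support_of_mem_edges hmem
      have hy : y ∈ p1.support := p1.snd_mem_support_of_mem_edges hmem
      rw [heIdx, hvIdx_mem x hx, hvIdx_mem y hy]
      rcases ih hQ.1 hmem with ⟨e1, e2⟩ | ⟨e1, e2⟩
      · exact Or.inl ⟨by omega, by omega⟩
      · exact Or.inr ⟨by omega, by omega⟩

lemma path_append {s t : V} (Q : G.Walk s t) (hQ : Q.IsPath) {a b : V}
    (ha : a ∈ Q.support) (hb : b ∈ Q.support) (hab : vIdx Q a < vIdx Q b)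
    (D : G.Walk a b) (hD : D.IsPath)
    (hint : ∀ v ∈ D.support, v ≠ a → v ≠ b → v ∉ Q.support) :
    ((Q.takeUntil a ha).append (D.append (Q.dropUntil b hb))).IsPath := by
  have hta : (Q.takeUntil a ha).IsPath := hQ.takeUntil ha
  have hdb : (Q.dropUntil b hb).IsPath := hQ.dropUntil hb
  have hnota : a ∉ D.support.tail := by
    have := hD.support_nodup
    rw [Walk.support_eq_cons D, List.nodup_cons] at this
    exact this.1
  have hnotb : b ∉ (Q.dropUntil b hb).support.tail := by
    have := hdb.support_nodup
    rw [Walk.support_eq_cons, List.nodup_cons] at this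
    exact this.1
  rw [Walk.isPath_def, Walk.support_append, Walk.support_append,
    List.tail_append_of_ne_nil D.support_ne_nil]
  refine List.nodup_append.mpr ⟨hta.support_nodup, List.nodup_append.mpr ⟨?_, ?_, ?_⟩, ?_⟩
  · exact hD.support_nodup.sublist (List.tail_sublist _)
  · exact hdb.support_nodup.sublist (List.tail_sublist _)
  · -- disjoint D.support.tail and db.support.tail
    intro v hv1 v' hv2 hvv'; subst hvv'
    have hvD : v ∈ D.support := List.mem_of_mem_tail hv1
    have hvQ : v ∈ Q.support := (Q.support_dropUntil_subset hb) (List.mem_of_mem_tail hv2)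
    by_cases hva : v = a
    · subst hva
      have := vIdx_lt_of_mem_dropUntil_tail hQ hb hv2
      omega
    · by_cases hvb : v = b
      · subst hvb; exact hnotb hv2
      · exact hint v hvD hva hvb hvQ
  · -- disjoint ta.support and (D.support.tail ++ db.support.tail)
    intro v hv1 v' hv2 hvv'; subst hvv'
    have hvle : vIdx Q v ≤ vIdx Q a := vIdx_le_of_mem_takeUntil hQ ha hv1
    have hvQ : v ∈ Q.support := (Q.support_takeUntil_subset ha) hv1
    rcases List.mem_append.mp hv2 with hv2 | hv2
    · have hvD : v ∈ D.support := List.mem_of_mem_tail hv2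
      by_cases hva : v = a
      · subst hva; exact hnota hv2
      · by_cases hvb : v = b
        · subst hvb; omega
        · exact hint v hvD hva hvb hvQ
    · have := vIdx_lt_of_mem_dropUntil_tail hQ hb hv2
      omega

end Aux2

section Aux3
set_option linter.unusedSectionVars false
set_option linter.unusedVariables false

variable {V : Type*} [DecidableEq V] {G : SimpleGraph V}

open SimpleGraph

lemma sym2_rep (e : Sym2 V) : ∃ x y, e = s(x, y) := by
  induction e using Sym2.ind with
  | _ x y => exact ⟨x, y, rfl⟩

lemma second_vertex_idx {s t : V} {Q : G.Walk s t} (hQ : Q.IsPath) {P : G.Walk s t}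
    (hPp : P.IsPath) {a b d : V} (ha : a ∈ Q.support) (hb : b ∈ Q.support)
    (hadj : G.Adj a d) (D2 : G.Walk d b)
    (hPeq : P = (Q.takeUntil a ha).append ((Walk.cons hadj D2).append (Q.dropUntil b hb))) :
    P.support.idxOf d = vIdx Q a + 1 := by
  have hPsup : P.support = (Q.takeUntil a ha).support ++
      (d :: (D2.support.tail ++ (Q.dropUntil b hb).support.tail)) := by
    rw [hPeq, Walk.support_append, Walk.support_append,
      List.tail_append_of_ne_nil (Walk.support_ne_nil _), Walk.support_cons, List.tail_cons,
      Walk.support_eq_cons D2, List.cons_append, List.tail_cons]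
  have hd_not : d ∉ (Q.takeUntil a ha).support := by
    have hnodup := hPp.support_nodup
    rw [hPsup, List.nodup_append] at hnodup
    exact fun hmem => hnodup.2.2 _ hmem _ List.mem_cons_self rfl
  rw [hPsup, List.idxOf_append_of_notMem hd_not, List.idxOf_cons_self,
    Walk.length_support, length_takeUntil Q hQ ha]

lemma vIdx_div_eq {s t : V} {Q : G.Walk s t} (hQ : Q.IsPath) {e : Sym2 V}
    (heQ : e ∈ Q.edges) {P : G.Walk s t} (hPp : P.IsPath) (heP : e ∉ P.edges)
    {a b a₀ b₀ : V} {D : G.Walk a b} {D₀ : G.Walk a₀ b₀}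
    (h1 : DivergeMergeOnce Q P a b D) (h2 : DivergeMergeOnce Q P a₀ b₀ D₀)
    (hfar : vIdx Q a + 1 < vIdx Q b) : vIdx Q a₀ = vIdx Q a := by
  obtain ⟨ha, hb, hD, hint, hPeq⟩ := h1
  obtain ⟨ha₀, hb₀, hD₀, hint₀, hPeq₀⟩ := h2
  cases D with
  | nil => omega
  | @cons _ d _ hadj D2 =>
    cases D₀ with
    | nil =>
      exfalso
      apply heP
      have hPQ : P = Q := by
        rw [hPeq₀, Walk.nil_append]
        exact Q.take_spec ha₀
      rw [hPQ]; exact heQ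
    | @cons _ d₀ _ hadj₀ D₀2 =>
      have hidx_d := second_vertex_idx hQ hPp ha hb hadj D2 hPeq
      have hidx_d₀ := second_vertex_idx hQ hPp ha₀ hb₀ hadj₀ D₀2 hPeq₀
      rcases lt_trichotomy (vIdx Q a₀) (vIdx Q a) with hlt | heqk | hgt
      · -- k₀ < k : derive False
        exfalso
        have hPsupA : P.support = (Q.takeUntil a ha).support ++
            ((Walk.cons hadj D2).append (Q.dropUntil b hb)).support.tail := by
          rw [hPeq, Walk.support_append]
        have hd₀mem : d₀ ∈ (Q.takeUntil a ha).support := by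
          apply list_mem_left_of_indexOf_lt
            (l2 := ((Walk.cons hadj D2).append (Q.dropUntil b hb)).support.tail)
          rw [← hPsupA, hidx_d₀, Walk.length_support, length_takeUntil Q hQ ha]
          omega
        have hvd₀ : vIdx Q d₀ = vIdx Q a₀ + 1 := by
          have e1 : vIdx Q d₀ = List.idxOf d₀ (Q.takeUntil a ha).support := by
            unfold vIdx; rw [support_split Q ha, List.idxOf_append_of_mem hd₀mem]
          have e2 : List.idxOf d₀ P.support = List.idxOf d₀ (Q.takeUntil a ha).support := by
            rw [hPsupA, List.idxOf_append_of_mem hd₀mem]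
          rw [e1, ← e2, hidx_d₀]
        have hd₀D : d₀ ∈ (Walk.cons hadj₀ D₀2).support := by
          rw [Walk.support_cons]; exact List.mem_cons_of_mem _ D₀2.start_mem_support
        have hd₀Q : d₀ ∈ Q.support := (Q.support_takeUntil_subset ha) hd₀mem
        have hd₀a₀ : d₀ ≠ a₀ := fun h => by rw [h] at hvd₀; omega
        have hd₀b₀ : d₀ = b₀ := by
          by_contra h
          exact hint₀ d₀ hd₀D hd₀a₀ h hd₀Q
        subst hd₀b₀
        have hD₀2nil : D₀2 = Walk.nil := by
          rw [← Walk.isPath_iff_eq_nil]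
          exact ((Walk.cons_isPath_iff _ _).mp hD₀).1
        subst hD₀2nil
        have hedgeP : s(a₀, d₀) ∈ P.edges := by
          rw [hPeq₀, Walk.edges_append, Walk.edges_append]
          exact List.mem_append_right _ (List.mem_append_left _ (by simp))
        have h1e : vIdx Q a₀ ≤ eIdx Q e := by
          by_contra h
          push_neg at h
          have := mem_take_of_eIdx_lt hQ ha₀ heQ h
          exact heP (by rw [hPeq₀, Walk.edges_append]; exact List.mem_append_left _ this)
        have h2e : eIdx Q e < vIdx Q d₀ := by
          by_contra h
          push_neg at h
          have hnt : e ∉ (Q.takeUntil d₀ hb₀).edges := fun hmem =>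
            absurd (eIdx_lt_of_mem_take hQ hb₀ hmem) (by omega)
          have hmem : e ∈ (Q.dropUntil d₀ hb₀).edges := by
            have := heQ
            rw [edges_split Q hb₀] at this
            rcases List.mem_append.mp this with h' | h'
            · exact absurd h' hnt
            · exact h'
          exact heP (by
            rw [hPeq₀, Walk.edges_append, Walk.edges_append]
            exact List.mem_append_right _ (List.mem_append_right _ hmem))
        have heIdx : eIdx Q e = vIdx Q a₀ := by omega
        obtain ⟨x, y, rfl⟩ := sym2_rep e
        have hxQ : x ∈ Q.support := Q.fst_mem_support_of_mem_edges heQ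
        have hyQ : y ∈ Q.support := Q.snd_mem_support_of_mem_edges heQ
        rcases edge_idx Q hQ heQ with ⟨ex, ey⟩ | ⟨ey, ex⟩
        · have hx : x = a₀ := (List.idxOf_inj hxQ).mp (by
            show vIdx Q x = vIdx Q a₀; omega)
          have hy : y = d₀ := (List.idxOf_inj hyQ).mp (by
            show vIdx Q y = vIdx Q d₀; omega)
          subst hx; subst hy
          exact heP hedgeP
        · have hy : y = a₀ := (List.idxOf_inj hyQ).mp (by
            show vIdx Q y = vIdx Q a₀; omega)
          have hx : x = d₀ := (List.idxOf_inj hxQ).mp (by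
            show vIdx Q x = vIdx Q d₀; omega)
          subst hx; subst hy
          exact heP (Sym2.eq_swap ▸ hedgeP)
      · exact heqk
      · -- k < k₀ : derive False
        exfalso
        have hPsup₀ : P.support = (Q.takeUntil a₀ ha₀).support ++
            ((Walk.cons hadj₀ D₀2).append (Q.dropUntil b₀ hb₀)).support.tail := by
          rw [hPeq₀, Walk.support_append]
        have hdmem : d ∈ (Q.takeUntil a₀ ha₀).support := by
          apply list_mem_left_of_indexOf_lt
            (l2 := ((Walk.cons hadj₀ D₀2).append (Q.dropUntil b₀ hb₀)).support.tail)
          rw [← hPsup₀, hidx_d, Walk.length_support, length_takeUntil Q hQ ha₀]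
          omega
        have hvd : vIdx Q d = vIdx Q a + 1 := by
          have e1 : vIdx Q d = List.idxOf d (Q.takeUntil a₀ ha₀).support := by
            unfold vIdx; rw [support_split Q ha₀, List.idxOf_append_of_mem hdmem]
          have e2 : List.idxOf d P.support = List.idxOf d (Q.takeUntil a₀ ha₀).support := by
            rw [hPsup₀, List.idxOf_append_of_mem hdmem]
          rw [e1, ← e2, hidx_d]
        have hdD : d ∈ (Walk.cons hadj D2).support := by
          rw [Walk.support_cons]; exact List.mem_cons_of_mem _ D2.start_mem_support
        have hdQ : d ∈ Q.support := (Q.support_takeUntil_subset ha₀) hdmem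
        have hda : d ≠ a := fun h => by rw [h] at hvd; omega
        have hdb : d ≠ b := fun h => by rw [h] at hvd; omega
        exact hint d hdD hda hdb hdQ

end Aux3

/-- Let `P` and `P'` be distinct elements of `𝓡`, where `P` is the
preferred replacement path for an edge `e` of `Q` and `P'` is the preferred replacement path
for an edge `e'` of `Q`, with `e` and `e'` both before `t_s` and `e` strictly before `e'`.
Then the divergence point `a'` of `P'` lies strictly after the endpoint of `e` closer to `s`
(the vertex of `Q` at position `eIdx Q e`), i.e., the detour of `P'` starts after the edge
`e` on `Q`. -/
theorem detour_starts_after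
    {V : Type*} [Fintype V] [DecidableEq V] {G : SimpleGraph V} {s t : V}
    (hst : s ≠ t) (Q : G.Walk s t) (hQpath : Q.IsPath) (hQmin : Q.length = G.dist s t)
    (t_s : V) (hts : t_s ∈ Q.support)
    (w : Sym2 V → ℝ)
    (hw : ∀ e ∈ G.edgeSet, 1 < w e ∧ w e < 1 + 1 / (Fintype.card V : ℝ) ^ 2)
    (hwinj : ∀ {u v u' v' : V} (p : G.Walk u v) (p' : G.Walk u' v'),
      p.IsPath → p'.IsPath → p.support ≠ p'.support → walkWeight w p ≠ walkWeight w p')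
    {e e' : Sym2 V} {P P' : G.Walk s t} {a b : V} {D : G.Walk a b}
    {a' b' : V} {D' : G.Walk a' b'}
    (hP : MemR w Q t_s e P a b D) (hP' : MemR w Q t_s e' P' a' b' D')
    (hPP' : P ≠ P')
    (hee' : eIdx Q e < eIdx Q e') :
    eIdx Q e < vIdx Q a' := by
  obtain ⟨heQ, heTs, ⟨hePe, hDMO⟩, hbTs, hpref⟩ := hP
  obtain ⟨he'Q, he'Ts, ⟨he'Pe, hDMO'⟩, hb'Ts, hpref'⟩ := hP'
  obtain ⟨ha, hbm, hDp, hint, hPeq⟩ := hDMO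
  obtain ⟨ha', hb'm, hD'p, hint', hP'eq⟩ := hDMO'
  by_contra hcon
  push_neg at hcon
  have haE : vIdx Q a ≤ eIdx Q e := by
    by_contra h
    push_neg at h
    have := mem_take_of_eIdx_lt hQpath ha heQ h
    exact hePe (by rw [hPeq, Walk.edges_append]; exact List.mem_append_left _ this)
  have hPpath : P.IsPath := by
    rw [hPeq]; exact path_append Q hQpath ha hbm (by omega) D hDp hint
  have hP'path : P'.IsPath := by
    rw [hP'eq]; exact path_append Q hQpath ha' hb'm (by omega) D' hD'p hint'
  -- e is not an edge of P'
  have heP' : e ∉ P'.edges := by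
    rw [hP'eq, Walk.edges_append, Walk.edges_append]
    intro hmem
    rcases List.mem_append.mp hmem with h1 | h1
    · exact absurd (eIdx_lt_of_mem_take hQpath ha' h1) (by omega)
    · rcases List.mem_append.mp h1 with h2 | h2
      · obtain ⟨x, y, rfl⟩ := sym2_rep e
        have hxD : x ∈ D'.support := D'.fst_mem_support_of_mem_edges h2
        have hyD : y ∈ D'.support := D'.snd_mem_support_of_mem_edges h2
        have hxQ : x ∈ Q.support := Q.fst_mem_support_of_mem_edges heQ
        have hyQ : y ∈ Q.support := Q.snd_mem_support_of_mem_edges heQ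
        have hxy : x ≠ y := (Q.adj_of_mem_edges heQ).ne
        have hx : x = a' ∨ x = b' := by
          by_contra h; push_neg at h; exact hint' x hxD h.1 h.2 hxQ
        have hy : y = a' ∨ y = b' := by
          by_contra h; push_neg at h; exact hint' y hyD h.1 h.2 hyQ
        rcases edge_idx Q hQpath heQ with ⟨ex, ey⟩ | ⟨ey, ex⟩ <;>
          rcases hx with rfl | rfl <;> rcases hy with rfl | rfl <;>
          first
            | exact hxy rfl
            | omega
      · exact absurd (vIdx_le_of_mem_drop_edges hQpath hb'm h2) (by omega)
  -- e' is not an edge of P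
  have he'P : e' ∉ P.edges := by
    rw [hPeq, Walk.edges_append, Walk.edges_append]
    intro hmem
    rcases List.mem_append.mp hmem with h1 | h1
    · exact absurd (eIdx_lt_of_mem_take hQpath ha h1) (by omega)
    · rcases List.mem_append.mp h1 with h2 | h2
      · obtain ⟨x, y, rfl⟩ := sym2_rep e'
        have hxD : x ∈ D.support := D.fst_mem_support_of_mem_edges h2
        have hyD : y ∈ D.support := D.snd_mem_support_of_mem_edges h2
        have hxQ : x ∈ Q.support := Q.fst_mem_support_of_mem_edges he'Q
        have hyQ : y ∈ Q.support := Q.snd_mem_support_of_mem_edges he'Q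
        have hxy : x ≠ y := (Q.adj_of_mem_edges he'Q).ne
        have hx : x = a ∨ x = b := by
          by_contra h; push_neg at h; exact hint x hxD h.1 h.2 hxQ
        have hy : y = a ∨ y = b := by
          by_contra h; push_neg at h; exact hint y hyD h.1 h.2 hyQ
        rcases edge_idx Q hQpath he'Q with ⟨ex, ey⟩ | ⟨ey, ex⟩ <;>
          rcases hx with rfl | rfl <;> rcases hy with rfl | rfl <;>
          first
            | exact hxy rfl
            | omega
      · exact absurd (vIdx_le_of_mem_drop_edges hQpath hbm h2) (by omega)
  have cand1 : RepCand Q e P' a' b' D' := ⟨heP', ha', hb'm, hD'p, hint', hP'eq⟩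
  have cand2 : RepCand Q e' P a b D := ⟨he'P, ha, hbm, hDp, hint, hPeq⟩
  obtain ⟨a₀, b₀, D₀, hc₀, hmin⟩ := hpref
  obtain ⟨a₀', b₀', D₀', hc₀', hmin'⟩ := hpref'
  have hva₀ : vIdx Q a₀ = vIdx Q a :=
    vIdx_div_eq hQpath heQ hPpath hePe ⟨ha, hbm, hDp, hint, hPeq⟩ hc₀.2 (by omega)
  have hva₀' : vIdx Q a₀' = vIdx Q a' :=
    vIdx_div_eq hQpath he'Q hP'path he'Pe ⟨ha', hb'm, hD'p, hint', hP'eq⟩ hc₀'.2 (by omega)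
  have hle1 := hmin P' a' b' D' cand1
  have hle2 := hmin' P a b D cand2
  unfold CandLE at hle1 hle2
  rw [hva₀] at hle1
  rw [hva₀'] at hle2
  rcases hle1 with h1 | ⟨hlen1, h1⟩
  · rcases hle2 with h2 | ⟨hlen2, h2⟩
    · omega
    · omega
  · rcases hle2 with h2 | ⟨hlen2, h2⟩
    · omega
    · rcases h1 with h1 | ⟨hv1, hw1⟩ <;> rcases h2 with h2 | ⟨hv2, hw2⟩
      · omega
      · omega
      · omega
      · have hww : walkWeight w P = walkWeight w P' := le_antisymm hw1 hw2
        have hsupne : P.support ≠ P'.support := fun h => hPP' (walk_support_inj P P' h)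
        exact hwinj P P' hPpath hP'path hsupne hww
end

section
/- Let P and P' be elements of 𝓡, where P is the preferred replacement path for an edge e of Q and P' is the preferred replacement path for an edge e' of Q, with e and e' both before t_s. If |P| > |P'|, then e is strictly before e' on Q (i.e., e is closer to s than e'). -/
open SimpleGraph

variable {V : Type*} [DecidableEq V]

/-- The length of `takeUntil` equals the index of the stopping vertex in the support. -/
lemma aux_length_takeUntil {G : SimpleGraph V} {u v x : V} (p : G.Walk u v)
    (h : x ∈ p.support) : (p.takeUntil x h).length = p.support.idxOf x := by
  induction p with
  | nil =>
    rw [Walk.mem_support_nil_iff] at h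
    subst x
    simp [Walk.takeUntil]
  | cons r p ih =>
    rename_i c d f
    by_cases hx : c = x
    · subst hx
      simp [Walk.takeUntil, List.idxOf_cons_self]
    · have hx' : x ∈ p.support := by
        cases h with
        | head => exact absurd rfl hx
        | tail _ h => exact h
      simp only [Walk.takeUntil, dif_neg hx, Walk.length_cons, Walk.support_cons,
        List.idxOf_cons_ne _ hx, ih hx']

/-- An endpoint of an edge of a walk occurs in the support at position at most
the index of the edge plus one. -/
lemma aux_endpoint_idx {G : SimpleGraph V} {u v : V} (p : G.Walk u v) {e : Sym2 V} {x : V}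
    (he : e ∈ p.edges) (hx : x ∈ e) : p.support.idxOf x ≤ p.edges.idxOf e + 1 := by
  induction p with
  | nil => simp at he
  | cons r p ih =>
    rename_i c d f
    rw [Walk.support_cons]
    by_cases hxc : x = c
    · subst hxc
      simp [List.idxOf_cons_self]
    · rw [List.idxOf_cons_ne _ (Ne.symm hxc)]
      by_cases hee : e = s(c, d)
      · subst hee
        have hxd : x = d := by
          rcases Sym2.mem_iff.mp hx with h | h
          · exact absurd h hxc
          · exact h
        subst hxd
        rw [Walk.edges_cons, List.idxOf_cons_self]
        have : p.support.idxOf x = 0 := by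
          rw [p.support_eq_cons, List.idxOf_cons_self]
        omega
      · rw [Walk.edges_cons] at he ⊢
        have he' : e ∈ p.edges := by
          cases he with
          | head => exact absurd rfl hee
          | tail _ h => exact h
        rw [List.idxOf_cons_ne _ (fun h => hee (h.symm))]
        have := ih he'
        omega

/-- Let `P` and `P'` be elements of `𝓡`, where `P` is the preferred
replacement path for an edge `e` of `Q` and `P'` is the preferred replacement path for an
edge `e'` of `Q`, with `e` and `e'` both before `t_s`. If `|P| > |P'|`, then `e` is strictly
before `e'` on `Q` (i.e., `e` is closer to `s` than `e'`). -/
theorem longer_implies_earlier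
    {V : Type*} [Fintype V] [DecidableEq V] {G : SimpleGraph V} {s t : V}
    (hst : s ≠ t) (Q : G.Walk s t) (hQpath : Q.IsPath) (hQmin : Q.length = G.dist s t)
    (t_s : V) (hts : t_s ∈ Q.support)
    (w : Sym2 V → ℝ)
    (hw : ∀ e ∈ G.edgeSet, 1 < w e ∧ w e < 1 + 1 / (Fintype.card V : ℝ) ^ 2)
    (hwinj : ∀ {u v u' v' : V} (p : G.Walk u v) (p' : G.Walk u' v'),
      p.IsPath → p'.IsPath → p.support ≠ p'.support → walkWeight w p ≠ walkWeight w p')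
    {e e' : Sym2 V} {P P' : G.Walk s t} {a b : V} {D : G.Walk a b}
    {a' b' : V} {D' : G.Walk a' b'}
    (hP : MemR w Q t_s e P a b D) (hP' : MemR w Q t_s e' P' a' b' D')
    (hlen : P'.length < P.length) :
    eIdx Q e < eIdx Q e' := by
  obtain ⟨heQ, helt, _, hbts, hpref⟩ := hP
  obtain ⟨he'Q, he'lt, ⟨he'P', hdmo'⟩, hb'ts, _⟩ := hP'
  by_contra hcon
  push_neg at hcon  -- hcon : eIdx Q e' ≤ eIdx Q e
  obtain ⟨ha', hb', hD'path, hD'int, hP'eq⟩ := hdmo'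
  have hQs : Q.support.Nodup := hQpath.support_nodup
  have hQe : Q.edges.Nodup := hQpath.isTrail.edges_nodup
  -- split of Q.edges at a'
  have hsplitA : (Q.takeUntil a' ha').edges ++ (Q.dropUntil a' ha').edges = Q.edges := by
    rw [← Walk.edges_append, Walk.take_spec]
  have hTAlen : (Q.takeUntil a' ha').edges.length = vIdx Q a' := by
    rw [Walk.length_edges, aux_length_takeUntil]; rfl
  -- split of Q.edges at b'
  have hsplitB : (Q.takeUntil b' hb').edges ++ (Q.dropUntil b' hb').edges = Q.edges := by
    rw [← Walk.edges_append, Walk.take_spec]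
  have hTBlen : (Q.takeUntil b' hb').edges.length = vIdx Q b' := by
    rw [Walk.length_edges, aux_length_takeUntil]; rfl
  -- Claim A : vIdx Q a' ≤ eIdx Q e'
  have claimA : vIdx Q a' ≤ eIdx Q e' := by
    by_contra hA
    push_neg at hA
    have he'T : e' ∈ (Q.takeUntil a' ha').edges := by
      by_contra he'T
      have : eIdx Q e' = (Q.takeUntil a' ha').edges.length
          + (Q.dropUntil a' ha').edges.idxOf e' := by
        rw [eIdx, ← hsplitA, List.idxOf_append_of_notMem he'T]
      omega
    apply he'P'
    rw [hP'eq, Walk.edges_append]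
    exact List.mem_append_left _ he'T
  -- Claim B : e ∉ P'.edges
  have claimB : e ∉ P'.edges := by
    rw [hP'eq, Walk.edges_append, Walk.edges_append]
    intro hmem
    rcases List.mem_append.mp hmem with hmem | hmem
    · -- e in the initial segment up to a'
      have h1 : eIdx Q e = (Q.takeUntil a' ha').edges.idxOf e := by
        rw [eIdx, ← hsplitA, List.idxOf_append_of_mem hmem]
      have h2 : (Q.takeUntil a' ha').edges.idxOf e
          < (Q.takeUntil a' ha').edges.length := List.idxOf_lt_length_iff.mpr hmem
      omega
    rcases List.mem_append.mp hmem with hmem | hmem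
    · -- e in the detour D' : impossible since b' would be an endpoint of e
      obtain ⟨⟨x, y⟩, rfl⟩ := e.exists_rep
      have hxD : x ∈ D'.support := D'.fst_mem_support_of_mem_edges hmem
      have hyD : y ∈ D'.support := D'.snd_mem_support_of_mem_edges hmem
      have hxQ : x ∈ Q.support := Q.fst_mem_support_of_mem_edges heQ
      have hyQ : y ∈ Q.support := Q.snd_mem_support_of_mem_edges heQ
      have hxy : x ≠ y := (Q.adj_of_mem_edges heQ).ne
      have hxab : x = a' ∨ x = b' := by
        by_contra h
        push_neg at h
        exact hD'int x hxD h.1 h.2 hxQ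
      have hyab : y = a' ∨ y = b' := by
        by_contra h
        push_neg at h
        exact hD'int y hyD h.1 h.2 hyQ
      have hb'e : b' ∈ s(x, y) := by
        rcases hxab with rfl | rfl
        · rcases hyab with rfl | rfl
          · exact absurd rfl hxy
          · exact Sym2.mem_mk_right _ _
        · exact Sym2.mem_mk_left _ _
      have h1 : vIdx Q b' ≤ eIdx Q s(x, y) + 1 := aux_endpoint_idx Q heQ hb'e
      have h2 : eIdx Q s(x, y) < vIdx Q t_s := helt
      omega
    · -- e in the final segment from b'
      have heT : e ∉ (Q.takeUntil b' hb').edges := by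
        intro h
        rw [← hsplitB, List.nodup_append] at hQe
        exact hQe.2.2 e h e hmem rfl
      have : eIdx Q e = (Q.takeUntil b' hb').edges.length
          + (Q.dropUntil b' hb').edges.idxOf e := by
        rw [eIdx, ← hsplitB, List.idxOf_append_of_notMem heT]
      omega
  -- P' is a replacement candidate for e, so P is at most as long as P'
  have hcand : RepCand Q e P' a' b' D' := ⟨claimB, ha', hb', hD'path, hD'int, hP'eq⟩
  obtain ⟨a0, b0, D0, _, hmin⟩ := hpref
  rcases hmin P' a' b' D' hcand with h | ⟨h, _⟩ <;> omega
end

section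
/- Let P ∈ 𝓡 be the preferred replacement path for two edges e₁ and e₂ of Q, both before t_s, with e₁ before e₂, and let f be an edge of Q lying between e₁ and e₂. If the preferred replacement path for f exists and belongs to 𝓡, then it is equal to P. Consequently, the set of edges of Q whose preferred replacement path in 𝓡 equals P forms a contiguous subpath of Q. -/
open SimpleGraph

variable {V : Type*} [DecidableEq V]

section ContigAux
open SimpleGraph Walk List
variable {V : Type*} [DecidableEq V] {G : SimpleGraph V}
set_option linter.unusedSectionVars false
variable {V : Type*} [DecidableEq V] {G : SimpleGraph V}

lemma support_takeUntil_eq {u v w : V} (p : G.Walk v w) (h : u ∈ p.support) :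
    (p.takeUntil u h).support = p.support.take (p.support.idxOf u + 1) := by
  induction p with
  | nil =>
    obtain rfl : u = _ := by simpa using h
    rw [show Walk.nil.takeUntil u h = Walk.nil from rfl]
    simp
  | cons r p ih =>
    rename_i x y z
    by_cases hx : x = u
    · subst hx
      rw [show (Walk.cons r p).takeUntil x h = Walk.nil from by
        simp [Walk.takeUntil]]
      simp [List.idxOf_cons_self]
    · have h' : u ∈ p.support := by
        cases (Walk.mem_support_iff (p := Walk.cons r p)).mp h with
        | inl h0 => exact absurd h0.symm hx
        | inr h0 => simpa using h0
      rw [show (Walk.cons r p).takeUntil u h = Walk.cons r (p.takeUntil u h') from by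
        simp [Walk.takeUntil, hx]]
      rw [Walk.support_cons, Walk.support_cons, List.idxOf_cons_ne _ hx]
      simp [ih h', Nat.succ_eq_add_one]
variable {V : Type*} [DecidableEq V] {G : SimpleGraph V}

lemma support_dropUntil_eq {u v w : V} (p : G.Walk v w) (h : u ∈ p.support) :
    (p.dropUntil u h).support = p.support.drop (p.support.idxOf u) := by
  induction p with
  | nil =>
    obtain rfl : u = _ := by simpa using h
    rw [show Walk.nil.dropUntil u h = Walk.nil from rfl]
    simp
  | cons r p ih =>
    rename_i x y z
    by_cases hx : x = u
    · subst hx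
      rw [show (Walk.cons r p).dropUntil x h = Walk.cons r p from by
        simp [Walk.dropUntil]]
      simp [List.idxOf_cons_self]
    · have h' : u ∈ p.support := by
        cases (Walk.mem_support_iff (p := Walk.cons r p)).mp h with
        | inl h0 => exact absurd h0.symm hx
        | inr h0 => simpa using h0
      rw [show (Walk.cons r p).dropUntil u h = p.dropUntil u h' from by
        simp [Walk.dropUntil, hx]]
      rw [Walk.support_cons, List.idxOf_cons_ne _ hx]
      simp [ih h', Nat.succ_eq_add_one]

-- list lemmas
lemma indexOf_lt_of_mem_take {α : Type*} [DecidableEq α] {l : List α} {x : α} {n : ℕ}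
    (h : x ∈ l.take n) : l.idxOf x < n := by
  have h1 : l.idxOf x = (l.take n).idxOf x := by
    conv_lhs => rw [← List.take_append_drop n l]
    exact List.idxOf_append_of_mem h
  have h2 : (l.take n).idxOf x < (l.take n).length := List.idxOf_lt_length_iff.2 h
  have h3 : (l.take n).length ≤ n := by simp [List.length_take]
  omega

lemma mem_take_of_indexOf_lt {α : Type*} [DecidableEq α] {l : List α} {x : α} {n : ℕ}
    (hx : x ∈ l) (h : l.idxOf x < n) : x ∈ l.take n := by
  have h1 : l.idxOf x < l.length := List.idxOf_lt_length_iff.2 hx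
  have h2 : l.idxOf x < (l.take n).length := by simp [List.length_take]; omega
  have h3 : (l.take n)[l.idxOf x] = l[l.idxOf x] := List.getElem_take (h := h2)
  have h4 : l[l.idxOf x] = x := List.getElem_idxOf h1
  have h5 : (l.take n)[l.idxOf x] ∈ l.take n := List.getElem_mem h2
  rwa [h3, h4] at h5

lemma le_indexOf_of_mem_drop {α : Type*} [DecidableEq α] {l : List α} (hl : l.Nodup)
    {x : α} {n : ℕ} (h : x ∈ l.drop n) : n ≤ l.idxOf x := by
  by_contra hc
  push_neg at hc
  have hx : x ∈ l := List.mem_of_mem_drop h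
  have h1 : x ∈ l.take n := mem_take_of_indexOf_lt hx hc
  have hd := List.disjoint_of_nodup_append (l₁ := l.take n) (l₂ := l.drop n)
    (by rw [List.take_append_drop]; exact hl)
  exact hd h1 h
variable {V : Type*} [DecidableEq V] {G : SimpleGraph V}

lemma length_takeUntil_eq {u v w : V} (p : G.Walk v w) (h : u ∈ p.support)
    (hsup : (p.takeUntil u h).support = p.support.take (p.support.idxOf u + 1)) :
    (p.takeUntil u h).length = p.support.idxOf u := by
  have h1 : (p.takeUntil u h).support.length = (p.takeUntil u h).length + 1 :=
    Walk.length_support _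
  have h2 : p.support.idxOf u < p.support.length := List.idxOf_lt_length_iff.2 h
  rw [hsup] at h1
  rw [List.length_take] at h1
  omega

lemma edges_takeUntil_eq {u v w : V} (p : G.Walk v w) (h : u ∈ p.support)
    (hlen : (p.takeUntil u h).length = p.support.idxOf u) :
    (p.takeUntil u h).edges = p.edges.take (p.support.idxOf u) := by
  have hspec := p.take_spec h
  have he : (p.takeUntil u h).edges ++ (p.dropUntil u h).edges = p.edges := by
    rw [← Walk.edges_append, hspec]
  have hl : (p.takeUntil u h).edges.length = p.support.idxOf u := by
    rw [Walk.length_edges]; exact hlen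
  rw [← he, ← hl, List.take_left]

lemma indexOf_support_le_of_mem_edge {v w : V} (p : G.Walk v w) {f : Sym2 V} {x : V}
    (hf : f ∈ p.edges) (hx : x ∈ f) :
    p.support.idxOf x ≤ p.edges.idxOf f + 1 := by
  induction p with
  | nil => simp at hf
  | cons r p ih =>
    rename_i a b c
    rw [Walk.edges_cons] at hf
    rw [Walk.support_cons, Walk.edges_cons]
    by_cases hef : f = s(a, b)
    · subst hef
      rw [List.idxOf_cons_self]
      rcases Sym2.mem_iff.mp hx with rfl | rfl
      · rw [List.idxOf_cons_self]; omega
      · rw [List.idxOf_cons_ne _ r.ne]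
        rw [p.support_eq_cons, List.idxOf_cons_self]
    · have hf' : f ∈ p.edges := by
        rcases List.mem_cons.mp hf with h | h
        · exact absurd h hef
        · exact h
      rw [List.idxOf_cons_ne _ (fun h => hef h.symm)]
      by_cases hxa : a = x
      · subst hxa; rw [List.idxOf_cons_self]; omega
      · rw [List.idxOf_cons_ne _ hxa]
        have := ih hf'
        omega
variable {V : Type*} [DecidableEq V] {G : SimpleGraph V}

lemma walk_eq_of_support_eq {u v : V} (p q : G.Walk u v) (h : p.support = q.support) :
    p = q := by
  induction p with
  | nil =>
    cases q with
    | nil => rfl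
    | cons r' q' =>
      have := congrArg List.length h
      rw [Walk.length_support, Walk.length_support] at this
      simp at this
  | cons r p ih =>
    cases q with
    | nil =>
      have := congrArg List.length h
      rw [Walk.length_support, Walk.length_support] at this
      simp at this
    | cons r' q' =>
      rename_i x y z y'
      rw [Walk.support_cons, Walk.support_cons] at h
      have h' : p.support = q'.support := by exact List.tail_eq_of_cons_eq h
      have hy : y = y' := by
        have h1 := p.support_eq_cons
        have h2 := q'.support_eq_cons
        rw [h1, h2] at h'
        exact List.head_eq_of_cons_eq h'
      subst hy
      rw [ih q' h']

section DMO

/-- abbreviation context: decomposition facts -/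
lemma dmo_edges {s t a b : V} {Q P : G.Walk s t} {D : G.Walk a b}
    (ha : a ∈ Q.support) (hb : b ∈ Q.support)
    (hP : P = (Q.takeUntil a ha).append (D.append (Q.dropUntil b hb))) :
    P.edges = (Q.takeUntil a ha).edges ++ (D.edges ++ (Q.dropUntil b hb).edges) := by
  rw [hP, Walk.edges_append, Walk.edges_append]

lemma mem_edges_of_lt_div {s t a b : V} {Q P : G.Walk s t} {D : G.Walk a b}
    (ha : a ∈ Q.support) (hb : b ∈ Q.support)
    (hP : P = (Q.takeUntil a ha).append (D.append (Q.dropUntil b hb)))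
    {g : Sym2 V} (hg : g ∈ Q.edges) (hlt : Q.edges.idxOf g < Q.support.idxOf a) :
    g ∈ P.edges := by
  have hsup := support_takeUntil_eq Q ha
  have hlen := length_takeUntil_eq Q ha hsup
  have hedg := edges_takeUntil_eq Q ha hlen
  have : g ∈ (Q.takeUntil a ha).edges := by
    rw [hedg]; exact mem_take_of_indexOf_lt hg hlt
  rw [dmo_edges ha hb hP]
  exact List.mem_append_left _ this

lemma not_mem_edges_of_between {s t a b : V} {Q P : G.Walk s t} {D : G.Walk a b}
    (hQ : Q.IsPath)
    (ha : a ∈ Q.support) (hb : b ∈ Q.support)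
    (hD : ∀ v ∈ D.support, v ≠ a → v ≠ b → v ∉ Q.support)
    (hP : P = (Q.takeUntil a ha).append (D.append (Q.dropUntil b hb)))
    {f : Sym2 V} (hf : f ∈ Q.edges)
    (h1 : Q.support.idxOf a ≤ Q.edges.idxOf f)
    (h2 : Q.edges.idxOf f + 1 < Q.support.idxOf b) :
    f ∉ P.edges := by
  have hsup := support_takeUntil_eq Q ha
  have hlen := length_takeUntil_eq Q ha hsup
  have hedg := edges_takeUntil_eq Q ha hlen
  have hsupb := support_takeUntil_eq Q hb
  have hlenb := length_takeUntil_eq Q hb hsupb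
  rw [dmo_edges ha hb hP]
  intro hmem
  rcases List.mem_append.mp hmem with hmem | hmem
  · -- in prefix
    rw [hedg] at hmem
    have := indexOf_lt_of_mem_take hmem
    omega
  rcases List.mem_append.mp hmem with hmem | hmem
  · -- in detour: endpoints of f are on Q and in D.support
    induction f with
    | _ x y =>
      have hadj : G.Adj x y := Q.adj_of_mem_edges hf
      have hxQ : x ∈ Q.support := Q.fst_mem_support_of_mem_edges hf
      have hyQ : y ∈ Q.support := Q.snd_mem_support_of_mem_edges hf
      have hxD : x ∈ D.support := D.fst_mem_support_of_mem_edges hmem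
      have hyD : y ∈ D.support := D.snd_mem_support_of_mem_edges hmem
      have hx : x = a ∨ x = b := by
        by_contra hc; push_neg at hc; exact hD x hxD hc.1 hc.2 hxQ
      have hy : y = a ∨ y = b := by
        by_contra hc; push_neg at hc; exact hD y hyD hc.1 hc.2 hyQ
      have hbf : b ∈ (s(x, y) : Sym2 V) := by
        rcases hx with rfl | rfl
        · rcases hy with rfl | rfl
          · exact absurd rfl hadj.ne
          · exact Sym2.mem_mk_right _ _
        · exact Sym2.mem_mk_left _ _
      have := indexOf_support_le_of_mem_edge Q hf hbf
      omega
  · -- in suffix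
    have hspec := Q.take_spec hb
    have heq : (Q.takeUntil b hb).edges ++ (Q.dropUntil b hb).edges = Q.edges := by
      rw [← Walk.edges_append, hspec]
    have hnd : ((Q.takeUntil b hb).edges ++ (Q.dropUntil b hb).edges).Nodup := by
      rw [heq]; exact hQ.isTrail.edges_nodup
    have hnotin : f ∉ (Q.takeUntil b hb).edges :=
      fun hfin => (List.disjoint_of_nodup_append hnd) hfin hmem
    have : Q.edges.idxOf f =
        (Q.takeUntil b hb).edges.length + (Q.dropUntil b hb).edges.idxOf f := by
      rw [← heq]; exact List.idxOf_append_of_notMem hnotin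
    rw [Walk.length_edges, hlenb] at this
    omega

lemma isPath_of_dmo {s t a b : V} {Q P : G.Walk s t} {D : G.Walk a b}
    (hQ : Q.IsPath)
    (ha : a ∈ Q.support) (hb : b ∈ Q.support) (hDp : D.IsPath)
    (hD : ∀ v ∈ D.support, v ≠ a → v ≠ b → v ∉ Q.support)
    (hP : P = (Q.takeUntil a ha).append (D.append (Q.dropUntil b hb)))
    (hab : Q.support.idxOf a < Q.support.idxOf b) :
    P.IsPath := by
  set ia := Q.support.idxOf a with hia
  set ib := Q.support.idxOf b with hib
  have hQnd : Q.support.Nodup := hQ.support_nodup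
  have hsupa := support_takeUntil_eq Q ha
  have hsupb := support_dropUntil_eq Q hb
  rw [Walk.isPath_def]
  have hPsup : P.support = (Q.takeUntil a ha).support ++
      (D.support.tail ++ (Q.dropUntil b hb).support.tail) := by
    rw [hP, Walk.support_append, Walk.support_append,
      List.tail_append_of_ne_nil (Walk.support_ne_nil _)]
  rw [hPsup, hsupa, hsupb, List.tail_drop]
  -- facts
  have hmem1 : ∀ x ∈ Q.support.take (ia + 1), Q.support.idxOf x ≤ ia ∧ x ∈ Q.support := by
    intro x hx
    exact ⟨by have := indexOf_lt_of_mem_take hx; omega, List.mem_of_mem_take hx⟩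
  have hmem3 : ∀ x ∈ Q.support.drop (ib + 1), ib + 1 ≤ Q.support.idxOf x ∧ x ∈ Q.support := by
    intro x hx
    exact ⟨le_indexOf_of_mem_drop hQnd hx, List.mem_of_mem_drop hx⟩
  have hDhead : D.support = a :: D.support.tail := D.support_eq_cons
  have hanotin : a ∉ D.support.tail := by
    have := hDp.support_nodup
    rw [hDhead] at this
    exact (List.nodup_cons.mp this).1
  have hbidx : Q.support.idxOf b = ib := rfl
  refine List.Nodup.append ?_ (List.Nodup.append ?_ ?_ ?_) ?_
  · exact hQnd.sublist (List.take_sublist _ _)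
  · exact hDp.support_nodup.sublist (List.tail_sublist _)
  · exact hQnd.sublist (List.drop_sublist _ _)
  · -- disjoint D.tail vs drop (ib+1)
    intro x hx2 hx3
    have hxD : x ∈ D.support := List.mem_of_mem_tail hx2
    have h3 := hmem3 x hx3
    have : x = a ∨ x = b := by
      by_contra hc; push_neg at hc; exact hD x hxD hc.1 hc.2 h3.2
    rcases this with rfl | rfl <;> omega
  · -- disjoint take (ia+1) vs (tail ++ drop)
    intro x hx1 hx23
    have h1 := hmem1 x hx1
    rcases List.mem_append.mp hx23 with hx2 | hx3
    · have hxD : x ∈ D.support := List.mem_of_mem_tail hx2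
      have : x = a ∨ x = b := by
        by_contra hc; push_neg at hc; exact hD x hxD hc.1 hc.2 h1.2
      rcases this with rfl | rfl
      · exact hanotin hx2
      · omega
    · have h3 := hmem3 x hx3
      omega

end DMO

end ContigAux

/-- Let `P ∈ 𝓡` be the preferred replacement path for two edges `e₁` and
`e₂` of `Q`, both before `t_s`, with `e₁` before `e₂`, and let `f` be an edge of `Q` lying
between `e₁` and `e₂`. If the preferred replacement path for `f` exists and belongs to `𝓡`,
then it is equal to `P`. Consequently, the set of edges of `Q` whose preferred replacement
path in `𝓡` equals `P` forms a contiguous subpath of `Q`. -/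
theorem contiguous_interval
    {V : Type*} [Fintype V] [DecidableEq V] {G : SimpleGraph V} {s t : V}
    (hst : s ≠ t) (Q : G.Walk s t) (hQpath : Q.IsPath) (hQmin : Q.length = G.dist s t)
    (t_s : V) (hts : t_s ∈ Q.support)
    (w : Sym2 V → ℝ)
    (hw : ∀ e ∈ G.edgeSet, 1 < w e ∧ w e < 1 + 1 / (Fintype.card V : ℝ) ^ 2)
    (hwinj : ∀ {u v u' v' : V} (p : G.Walk u v) (p' : G.Walk u' v'),
      p.IsPath → p'.IsPath → p.support ≠ p'.support → walkWeight w p ≠ walkWeight w p')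
    {e₁ e₂ : Sym2 V} {P : G.Walk s t} {a₁ b₁ : V} {D₁ : G.Walk a₁ b₁}
    {a₂ b₂ : V} {D₂ : G.Walk a₂ b₂}
    (hP1 : MemR w Q t_s e₁ P a₁ b₁ D₁) (hP2 : MemR w Q t_s e₂ P a₂ b₂ D₂)
    (h12 : eIdx Q e₁ < eIdx Q e₂)
    {f : Sym2 V} (hf : f ∈ Q.edges)
    (hf1 : eIdx Q e₁ ≤ eIdx Q f) (hf2 : eIdx Q f ≤ eIdx Q e₂) :
    ∀ (Pf : G.Walk s t) (a b : V) (D : G.Walk a b), MemR w Q t_s f Pf a b D → Pf = P := by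
  
  intro Pf a b D hPf
  obtain ⟨he₁Q, he₁lt, ⟨he₁P, ha₁, hb₁, hD₁p, hD₁int, hPdec⟩, hb₁gt, _⟩ := hP1
  obtain ⟨he₂Q, he₂lt, ⟨he₂P, _⟩, hb₂gt, hPref₂⟩ := hP2
  obtain ⟨hfQ, hflt, ⟨hfPf, ha, hb, hDp, hDint, hPfdec⟩, hbgt, hPreff⟩ := hPf
  -- unfold index defs
  simp only [eIdx, vIdx] at he₁lt he₂lt hflt hb₁gt hb₂gt hbgt h12 hf1 hf2 ⊢
  -- Step 1 : vIdx a₁ ≤ eIdx e₁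
  have hstep1 : Q.support.idxOf a₁ ≤ Q.edges.idxOf e₁ := by
    by_contra hc
    push_neg at hc
    exact he₁P (mem_edges_of_lt_div ha₁ hb₁ hPdec he₁Q hc)
  -- Step 1' : vIdx a ≤ eIdx f
  have hstep1' : Q.support.idxOf a ≤ Q.edges.idxOf f := by
    by_contra hc
    push_neg at hc
    exact hfPf (mem_edges_of_lt_div ha hb hPfdec hfQ hc)
  -- Step 2 : f ∉ P.edges
  have hfP : f ∉ P.edges := by
    refine not_mem_edges_of_between hQpath ha₁ hb₁ hD₁int hPdec hf ?_ ?_ <;> omega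
  -- Step 2' : e₂ ∉ Pf.edges
  have he₂Pf : e₂ ∉ Pf.edges := by
    refine not_mem_edges_of_between hQpath ha hb hDint hPfdec he₂Q ?_ ?_ <;> omega
  -- paths
  have hPpath : P.IsPath :=
    isPath_of_dmo hQpath ha₁ hb₁ hD₁p hD₁int hPdec (by omega)
  have hPfpath : Pf.IsPath :=
    isPath_of_dmo hQpath ha hb hDp hDint hPfdec (by omega)
  -- order comparisons
  obtain ⟨aP, bP, DP, hRCP2, hminP⟩ := hPref₂
  obtain ⟨af, bf, Df, hRCff, hminf⟩ := hPreff
  have h6 : CandLE w Q P aP Pf af := hminP Pf af bf Df ⟨he₂Pf, hRCff.2⟩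
  have h7 : CandLE w Q Pf af P aP := hminf P aP bP DP ⟨hfP, hRCP2.2⟩
  have hweq : walkWeight w Pf = walkWeight w P := by
    rcases h6 with h6 | ⟨h6l, h6⟩ <;> rcases h7 with h7 | ⟨h7l, h7⟩
    · omega
    · omega
    · omega
    · rcases h6 with h6 | ⟨h6i, h6⟩ <;> rcases h7 with h7 | ⟨h7i, h7⟩
      · omega
      · omega
      · omega
      · linarith
  by_contra hne
  have hsne : Pf.support ≠ P.support := by
    intro hs
    exact hne (walk_eq_of_support_eq _ _ hs)
  exact hwinj Pf P hPfpath hPpath hsne hweq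
end

section
/- For every vertex u of T and all sources s, s' ∈ S such that u lies both on the tree path from s to t and on the tree path from s' to t, the first intersection vertex on the path from u to s equals the first intersection vertex on the path from u to s', i.e., Int_s(u) = Int_{s'}(u). -/
open SimpleGraph

lemma walk_support_getElem {V : Type*} {G : SimpleGraph V} :
    ∀ {u v : V} (p : G.Walk u v) (i : ℕ) (h : i < p.support.length),
      p.support[i] = p.getVert i := by
  intro u v p
  induction p with
  | nil =>
    intro i h
    simp only [Walk.support_nil, List.length_cons, List.length_nil] at h
    obtain rfl : i = 0 := by omega
    simp
  | cons hadj q ih => intro i h; cases i with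
    | zero => simp [Walk.getVert_zero]
    | succ i =>
      simp only [Walk.support_cons, List.getElem_cons_succ, Walk.getVert_cons_succ]
      exact ih i (by simpa [Walk.length_support] using h)

lemma three_le_degree_of_three_adj {V : Type*} [Fintype V] [DecidableEq V] {G : SimpleGraph V}
    [DecidableRel G.Adj] {v a b c : V}
    (ha : G.Adj v a) (hb : G.Adj v b) (hc : G.Adj v c)
    (hab : a ≠ b) (hac : a ≠ c) (hbc : b ≠ c) : 3 ≤ G.degree v := by
  have hsub : ({a, b, c} : Finset V) ⊆ G.neighborFinset v := by
    intro x hx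
    simp only [Finset.mem_insert, Finset.mem_singleton] at hx
    rcases hx with rfl | rfl | rfl <;> simpa [SimpleGraph.mem_neighborFinset]
  have hcard : ({a, b, c} : Finset V).card = 3 := by
    rw [Finset.card_insert_of_notMem (by simp [hab, hac]),
      Finset.card_insert_of_notMem (by simp [hbc]), Finset.card_singleton]
  calc 3 = ({a, b, c} : Finset V).card := hcard.symm
    _ ≤ (G.neighborFinset v).card := Finset.card_le_card hsub
    _ = G.degree v := rfl

/-- `x` is the first intersection vertex (w.r.t. the predicate `IsInt`) on the walk `W`:
`x` lies on `W`, is an intersection vertex, and is nearest to the start of `W` among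
intersection vertices of `W`. -/
def FirstInter {V : Type*} [DecidableEq V] {T : SimpleGraph V} {u s : V}
    (IsInt : V → Prop) (W : T.Walk u s) (x : V) : Prop :=
  x ∈ W.support ∧ IsInt x ∧
    ∀ y ∈ W.support, IsInt y → W.support.idxOf x ≤ W.support.idxOf y

/-- `T` is a finite tree with a distinguished vertex `t` and a set `S` of
sources. An intersection vertex is `t`, a source, or a vertex of degree at least `3`.
For every vertex `u` of `T` and all sources `s, s' ∈ S` such that `u` lies both on the tree
path from `s` to `t` and on the tree path from `s'` to `t`, the first intersection vertex
on the path from `u` to `s` equals the first intersection vertex on the path from `u`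
to `s'`, i.e., `Int_s(u) = Int_{s'}(u)`. -/
theorem first_intersection_independent_of_source
    {V : Type*} [Fintype V] [DecidableEq V] {T : SimpleGraph V} [DecidableRel T.Adj]
    (hT : T.IsTree) (t : V) (S : Finset V)
    (IsInt : V → Prop)
    (hInt : ∀ v, IsInt v ↔ (v = t ∨ v ∈ S ∨ 3 ≤ T.degree v))
    {s s' : V} (hs : s ∈ S) (hs' : s' ∈ S) (u : V)
    {p : T.Walk s t} (hp : p.IsPath) (hu : u ∈ p.support)
    {p' : T.Walk s' t} (hp' : p'.IsPath) (hu' : u ∈ p'.support)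
    {x x' : V}
    (hx : FirstInter IsInt ((p.takeUntil u hu).reverse) x)
    (hx' : FirstInter IsInt ((p'.takeUntil u hu').reverse) x') :
    x = x' := by
  classical
  obtain ⟨hxL, hxI, hxmin⟩ := hx
  obtain ⟨hxL', hxI', hxmin'⟩ := hx'
  set q : T.Walk u s := (p.takeUntil u hu).reverse with hqdef
  set q' : T.Walk u s' := (p'.takeUntil u hu').reverse with hq'def
  have hq : q.IsPath := (hp.takeUntil hu).reverse
  have hq' : q'.IsPath := (hp'.takeUntil hu').reverse
  set L := q.support with hLdef
  set L' := q'.support with hL'def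
  have hL : L.Nodup := hq.support_nodup
  have hL' : L'.Nodup := hq'.support_nodup
  have hlen : L.length = q.length + 1 := q.length_support
  have hlen' : L'.length = q'.length + 1 := q'.length_support
  have hget : ∀ (i : ℕ) (h : i < L.length), L[i] = q.getVert i :=
    fun i h => walk_support_getElem q i h
  have hget' : ∀ (i : ℕ) (h : i < L'.length), L'[i] = q'.getVert i :=
    fun i h => walk_support_getElem q' i h
  have hadj : ∀ (i : ℕ) (h : i + 1 < L.length), T.Adj (L[i]'(by omega)) (L[i+1]'h) := by
    intro i h
    rw [hget i (by omega), hget (i+1) h]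
    exact q.adj_getVert_succ (by omega)
  have hadj' : ∀ (i : ℕ) (h : i + 1 < L'.length), T.Adj (L'[i]'(by omega)) (L'[i+1]'h) := by
    intro i h
    rw [hget' i (by omega), hget' (i+1) h]
    exact q'.adj_getVert_succ (by omega)
  have hLpos : 0 < L.length := by omega
  have hL'pos : 0 < L'.length := by omega
  have h0 : L[0]'hLpos = u := by rw [hget 0 hLpos, Walk.getVert_zero]
  have h0' : L'[0]'hL'pos = u := by rw [hget' 0 hL'pos, Walk.getVert_zero]
  -- longest common prefix
  set P : ℕ → Prop := fun n => L.take n = L'.take n with hPdef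
  set m := min L.length L'.length with hmdef
  set k := Nat.findGreatest P m with hkdef
  have hm1 : 1 ≤ m := by omega
  have hP1 : P 1 := by
    show L.take 1 = L'.take 1
    rw [List.take_one, List.take_one, List.head?_eq_getElem?,
      List.head?_eq_getElem?, List.getElem?_eq_getElem hLpos,
      List.getElem?_eq_getElem hL'pos, h0, h0']
  have hk1 : 1 ≤ k := Nat.le_findGreatest hm1 hP1
  have hPk : P k := Nat.findGreatest_spec (m := 0) (Nat.zero_le _) rfl
  have hkm : k ≤ m := Nat.findGreatest_le m
  have hpre : ∀ (i : ℕ), i < k → ∀ (h1 : i < L.length) (h2 : i < L'.length), L[i] = L'[i] := by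
    intro i hik h1 h2
    have := congrArg (fun t => t[i]?) hPk
    simpa [List.getElem?_take, hik, List.getElem?_eq_getElem, h1, h2] using this
  obtain ⟨j, hjk⟩ : ∃ j, k = j + 1 := ⟨k - 1, by omega⟩
  have hjL : j < L.length := by omega
  have hjL' : j < L'.length := by omega
  set w := L[j]'hjL with hwdef
  have hwL' : L'[j]'hjL' = w := (hpre j (by omega) hjL hjL').symm
  have hwInt : IsInt w := by
    rw [hInt]
    by_cases hcase1 : k = L.length
    · right; left
      have hws : w = s := by
        rw [hwdef, hget j hjL, show j = q.length by omega, Walk.getVert_length]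
      rwa [hws]
    by_cases hcase2 : k = L'.length
    · right; left
      have hws : w = s' := by
        rw [← hwL', hget' j hjL', show j = q'.length by omega, Walk.getVert_length]
      rwa [hws]
    have hkL : j + 1 < L.length := by omega
    have hkL' : j + 1 < L'.length := by omega
    have hmc : m = L.length ∨ m = L'.length := by
      rw [hmdef]; exact min_choice _ _
    have hkmlt : k < m := by rcases hmc with h | h <;> omega
    have hnP : ¬ P (j + 2) :=
      Nat.findGreatest_is_greatest (by rw [← hkdef]; omega) (by omega)
    have hPk1 : L.take (j+1) = L'.take (j+1) := by
      have h := hPk; rw [hjk] at h; exact h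
    have hne : L[j+1]'hkL ≠ L'[j+1]'hkL' := by
      intro he
      apply hnP
      show L.take (j+2) = L'.take (j+2)
      have e1 : L.take (j+1+1) = L.take (j+1) ++ L[j+1]?.toList := List.take_succ
      have e2 : L'.take (j+1+1) = L'.take (j+1) ++ L'[j+1]?.toList := List.take_succ
      rw [show j + 2 = (j+1) + 1 from rfl, e1, e2, hPk1,
        List.getElem?_eq_getElem hkL, List.getElem?_eq_getElem hkL', he]
    have ha : T.Adj w (L[j+1]'hkL) := hadj j hkL
    have hb : T.Adj w (L'[j+1]'hkL') := hwL' ▸ hadj' j hkL'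
    by_cases hj0 : j = 0
    · -- w = u
      have hwu : w = u := by rw [hwdef, hget j hjL, hj0, Walk.getVert_zero]
      by_cases hut : u = t
      · left; rw [hwu, hut]
      · right; right
        have hdd : p'.dropUntil u hu' = p.dropUntil u hu :=
          (hT.existsUnique_path u t).unique (hp'.dropUntil hu') (hp.dropUntil hu)
        set d : T.Walk u t := p.dropUntil u hu with hddef
        have hdnil : ¬ d.Nil := Walk.not_nil_of_ne hut
        have hdlen : 0 < d.length := Walk.not_nil_iff_lt_length.1 hdnil
        set c := d.getVert 1 with hcdef
        have hc : T.Adj u c := d.adj_snd hdnil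
        have hcd : c ∈ d.support := Walk.mem_support_iff_exists_getVert.2 ⟨1, rfl, by omega⟩
        have hctail : c ∈ d.support.tail := by
          rw [d.support_eq_cons] at hcd
          rcases List.mem_cons.1 hcd with h | h
          · exact absurd h.symm hc.ne
          · exact h
        have hdisj : (p.takeUntil u hu).support.Disjoint d.support.tail := by
          have hnd := hp.support_nodup
          rw [← Walk.take_spec p hu, Walk.support_append] at hnd
          exact List.disjoint_of_nodup_append hnd
        have hdisj' : (p'.takeUntil u hu').support.Disjoint d.support.tail := by
          have hnd := hp'.support_nodup
          rw [← Walk.take_spec p' hu', Walk.support_append] at hnd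
          have hdj := List.disjoint_of_nodup_append hnd
          rwa [hdd] at hdj
        have haL : (L[j+1]'hkL) ∈ (p.takeUntil u hu).support := by
          have hmem : (L[j+1]'hkL) ∈ q.support := List.getElem_mem hkL
          rw [hqdef, Walk.support_reverse, List.mem_reverse] at hmem
          exact hmem
        have hbL : (L'[j+1]'hkL') ∈ (p'.takeUntil u hu').support := by
          have hmem : (L'[j+1]'hkL') ∈ q'.support := List.getElem_mem hkL'
          rw [hq'def, Walk.support_reverse, List.mem_reverse] at hmem
          exact hmem
        have hca : (L[j+1]'hkL) ≠ c := fun h => hdisj haL (h ▸ hctail)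
        have hcb : (L'[j+1]'hkL') ≠ c := fun h => hdisj' hbL (h ▸ hctail)
        rw [hwu]
        exact three_le_degree_of_three_adj (hwu ▸ ha) (hwu ▸ hb) hc hne hca hcb
    · right; right
      obtain ⟨i, hji⟩ : ∃ i, j = i + 1 := ⟨j - 1, by omega⟩
      have hiL : i + 1 < L.length := by omega
      have hiL' : i + 1 < L'.length := by omega
      have e1 : L[i+1]'hiL = w := by
        rw [hget _ hiL, hwdef, hget j hjL, hji]
      have hprev : T.Adj w (L[i]'(by omega)) := (e1 ▸ hadj i hiL).symm
      have hii' : L[i]'(by omega) = L'[i]'(by omega) := hpre i (by omega) (by omega) (by omega)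
      have d1 : (L[i]'(by omega)) ≠ (L[j+1]'hkL) := by
        intro h
        have := (hL.getElem_inj_iff).1 h
        omega
      have d2 : (L[i]'(by omega)) ≠ (L'[j+1]'hkL') := by
        rw [hii']
        intro h
        have := (hL'.getElem_inj_iff).1 h
        omega
      exact three_le_degree_of_three_adj hprev ha hb d1 d2 hne
  -- index chase
  have hidxw : L.idxOf w = j := List.Nodup.idxOf_getElem hL j hjL
  have hidxw' : L'.idxOf w = j := by rw [← hwL']; exact List.Nodup.idxOf_getElem hL' j hjL'
  have hxle : L.idxOf x ≤ j := hidxw ▸ hxmin w (List.getElem_mem hjL) hwInt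
  have hixlen : L.idxOf x < L.length := List.idxOf_lt_length_iff.2 hxL
  have hxeq : L[L.idxOf x]'hixlen = x := List.getElem_idxOf hixlen
  have hixlen2 : L.idxOf x < L'.length := by omega
  have hxeq' : L'[L.idxOf x]'hixlen2 = x := by
    rw [← hpre (L.idxOf x) (by omega) hixlen hixlen2]; exact hxeq
  have hxmem' : x ∈ L' := hxeq' ▸ List.getElem_mem hixlen2
  have hidx2 : L'.idxOf x = L.idxOf x := by
    conv_lhs => rw [← hxeq']
    exact List.Nodup.idxOf_getElem hL' _ hixlen2
  have hx'le : L'.idxOf x' ≤ j := hidxw' ▸ hxmin' w (hwL' ▸ List.getElem_mem hjL') hwInt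
  have hix'len : L'.idxOf x' < L'.length := List.idxOf_lt_length_iff.2 hxL'
  have hx'eq : L'[L'.idxOf x']'hix'len = x' := List.getElem_idxOf hix'len
  have hix'len2 : L'.idxOf x' < L.length := by omega
  have hx'eq2 : L[L'.idxOf x']'hix'len2 = x' := by
    rw [hpre (L'.idxOf x') (by omega) hix'len2 hix'len]; exact hx'eq
  have hx'mem : x' ∈ L := hx'eq2 ▸ List.getElem_mem hix'len2
  have hidx3 : L.idxOf x' = L'.idxOf x' := by
    conv_lhs => rw [← hx'eq2]
    exact List.Nodup.idxOf_getElem hL _ hix'len2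
  have h1 : L.idxOf x ≤ L.idxOf x' := hxmin x' hx'mem hxI'
  have h2 : L'.idxOf x' ≤ L'.idxOf x := hxmin' x hxmem' hxI
  exact (List.idxOf_inj hxL).1 (by omega)
end
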